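/- arXiv:1707.07992 — 2 statements merged into one kernel-verified Lean document; each statement's English description precedes it below -/
import Mathlib

section
/- Let A = A_C(Λ) be a non-degenerate code algebra with a_{i,α} ≠ 1 for all i ∈ supp(α), α ∈ C*, and fix i. Then the fusion law for t_i satisfies the Seress condition (A₀(t_i)·A_μ(t_i) ⊆ A_μ(t_i) for all eigenvalues μ ≠ 1 of ad_{t_i}) if and only if ad_{t_i} has at most one eigenvalue not equal to 0 or 1. -/
/-!
In the basis `{t j} ∪ {e α}` the map `ad (t i)` is diagonal: `t i` has eigenvalue `1`, the `t j`
with `j ≠ i` and the `e γ` with `γ i = 0` have eigenvalue `0`, and `e α` with `α i = 1` has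
eigenvalue `a i α ∉ {0, 1}`. Both conditions therefore say that `a i` is constant on the
codewords of `C*` through `i`. If `a i α ≠ a i β`, then `e (α + β) ∈ A₀`, while
`e (α + β) · e α` is a nonzero multiple of `e β ∉ A_{a i α}`. Conversely, `A₀ · A_μ ⊆ A_μ` is
checked on basis vectors: multiplication by `t j` commutes with `ad (t i)`, and for `γ i = 0`
the product `e γ · e β` is a multiple of `e (γ + β)`, whose eigenvalue is that of `e β`
because `(γ + β) i = β i`.
-/

abbrev Word (n : ℕ) := Fin n → ZMod 2

def wsupp {n : ℕ} (α : Word n) : Finset (Fin n) :=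
  Finset.univ.filter fun i => α i = 1

def dotW {n : ℕ} (u v : Word n) : ZMod 2 := ∑ i, u i * v i

def IsStar {n : ℕ} (C : Submodule (ZMod 2) (Word n)) (α : Word n) : Prop :=
  α ∈ C ∧ α ≠ 0 ∧ α ≠ 1

structure CodeAlgebra (F : Type*) [Field F] {n : ℕ} (C : Submodule (ZMod 2) (Word n))
    (a : Fin n → Word n → F) (b : Word n → Word n → F) (c : Fin n → Word n → F)
    (A : Type*) [AddCommGroup A] [Module F A] where
  mul : A →ₗ[F] A →ₗ[F] A
  t : Fin n → A
  e : Word n → A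
  bas : Module.Basis (Fin n ⊕ {α : Word n // IsStar C α}) F A
  bas_t : ∀ i, bas (Sum.inl i) = t i
  bas_e : ∀ α, bas (Sum.inr α) = e α.1
  mul_comm : ∀ x y : A, mul x y = mul y x
  t_mul_t : ∀ i j, mul (t i) (t j) = if i = j then t i else 0
  t_mul_e : ∀ (i : Fin n) (α : Word n), IsStar C α →
    mul (t i) (e α) = if α i = 1 then a i α • e α else 0
  e_mul_e : ∀ (α β : Word n), IsStar C α → IsStar C β → α ≠ β → α + β ≠ 1 →
    mul (e α) (e β) = b α β • e (α + β)
  e_mul_self : ∀ (α : Word n), IsStar C α →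
    mul (e α) (e α) = ∑ i ∈ wsupp α, c i α • t i
  e_mul_compl : ∀ (α β : Word n), IsStar C α → IsStar C β → α + β = 1 →
    mul (e α) (e β) = 0

def Nondeg {F : Type*} [Field F] {n : ℕ} (C : Submodule (ZMod 2) (Word n))
    (a : Fin n → Word n → F) (b : Word n → Word n → F) (c : Fin n → Word n → F) : Prop :=
  (∀ i : Fin n, ∃ α ∈ C, α i = 1) ∧ (∃ α, IsStar C α) ∧
  (∀ i α, IsStar C α → α i = 1 → a i α ≠ 0) ∧
  (∀ α β, IsStar C α → IsStar C β → α ≠ β → α + β ≠ 1 → b α β ≠ 0) ∧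
  (∀ i α, IsStar C α → α i = 1 → c i α ≠ 0)

lemma ZMod.eq_zero_of_ne_one_two {x : ZMod 2} (h : x ≠ 1) : x = 0 := by
  revert x; decide

lemma isStar_add {n : ℕ} {C : Submodule (ZMod 2) (Word n)} {α β : Word n}
    (hα : IsStar C α) (hβ : IsStar C β) (hne : α ≠ β) (h1 : α + β ≠ 1) : IsStar C (α + β) :=
  ⟨C.add_mem hα.1 hβ.1, by rwa [Ne, add_eq_zero_iff_eq_neg, ZModModule.neg_eq_self], h1⟩

open Module Module.End

namespace Module.Basis

variable {R ι M : Type*} [CommRing R] [AddCommGroup M] [Module R M] (b : Basis ι R M)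
  {d : ι → R} {f : End R M}

lemma repr_apply_of_diagonal (hf : ∀ k, f (b k) = d k • b k) (x : M) (k : ι) :
    b.repr (f x) k = d k * b.repr x k := by
  have : Finsupp.lapply k ∘ₗ b.repr.toLinearMap ∘ₗ f =
      d k • (Finsupp.lapply k ∘ₗ b.repr.toLinearMap) := by
    refine b.ext fun l => ?_
    rcases eq_or_ne l k with rfl | hlk
    · simp [hf]
    · simp [hf, hlk]
  exact LinearMap.congr_fun this x

lemma commute_of_diagonal {d' : ι → R} {g : End R M} (hf : ∀ k, f (b k) = d k • b k)
    (hg : ∀ k, g (b k) = d' k • b k) : Commute f g :=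
  b.ext fun k => by simp [hf, hg, smul_smul, mul_comm]

variable [IsDomain R]

lemma mem_eigenspace_iff_of_diagonal (hf : ∀ k, f (b k) = d k • b k) {μ : R} {x : M} :
    x ∈ f.eigenspace μ ↔ ∀ k, b.repr x k ≠ 0 → d k = μ := by
  rw [mem_eigenspace_iff]
  constructor
  · intro hx k hk
    have := congrArg (b.repr · k) hx
    simp only [b.repr_apply_of_diagonal hf, map_smul, Finsupp.smul_apply, smul_eq_mul] at this
    exact mul_right_cancel₀ hk this
  · intro h
    refine b.repr.injective (Finsupp.ext fun k => ?_)
    rw [b.repr_apply_of_diagonal hf, map_smul, Finsupp.smul_apply, smul_eq_mul]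
    by_cases hk : b.repr x k = 0
    · simp [hk]
    · rw [h k hk]

lemma eigenspace_le_span_of_diagonal (hf : ∀ k, f (b k) = d k • b k) (μ : R) :
    f.eigenspace μ ≤ Submodule.span R (b '' {k | d k = μ}) := fun _ hx =>
  b.mem_span_image.mpr fun k hk =>
    (b.mem_eigenspace_iff_of_diagonal hf).mp hx k (Finsupp.mem_support_iff.mp hk)

lemma hasEigenvalue_iff_of_diagonal (hf : ∀ k, f (b k) = d k • b k) {μ : R} :
    f.HasEigenvalue μ ↔ ∃ k, d k = μ := by
  constructor
  · intro h
    obtain ⟨_, hx, hx0⟩ := h.exists_hasEigenvector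
    obtain ⟨k, hk⟩ := Finsupp.ne_iff.mp ((map_ne_zero_iff _ b.repr.injective).mpr hx0)
    exact ⟨k, (b.mem_eigenspace_iff_of_diagonal hf).mp hx k hk⟩
  · rintro ⟨k, rfl⟩
    exact hasEigenvalue_of_hasEigenvector ⟨mem_eigenspace_iff.mpr (hf k), b.ne_zero k⟩

end Module.Basis

namespace CodeAlgebra

variable {F : Type*} [Field F] {n : ℕ} {C : Submodule (ZMod 2) (Word n)}
  {a : Fin n → Word n → F} {b : Word n → Word n → F} {c : Fin n → Word n → F}
  {A : Type*} [AddCommGroup A] [Module F A] (CA : CodeAlgebra F C a b c A) (i : Fin n)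

abbrev ad (x : A) : End F A := CA.mul x

def adtDiag (C : Submodule (ZMod 2) (Word n)) (a : Fin n → Word n → F) (i : Fin n) :
    Fin n ⊕ {α : Word n // IsStar C α} → F
  | .inl j => if j = i then 1 else 0
  | .inr α => if α.1 i = 1 then a i α.1 else 0

lemma ad_t_bas (k : Fin n ⊕ {α : Word n // IsStar C α}) :
    CA.ad (CA.t i) (CA.bas k) = adtDiag C a i k • CA.bas k := by
  rcases k with j | ⟨α, hα⟩
  · rw [CA.bas_t, CA.t_mul_t]
    rcases eq_or_ne j i with rfl | hji
    · simp [adtDiag]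
    · simp [adtDiag, hji, hji.symm]
  · rw [CA.bas_e, CA.t_mul_e i α hα]
    by_cases hαi : α i = 1 <;> simp [adtDiag, hαi]

lemma bas_mem_eigenspace_ad_t (k : Fin n ⊕ {α : Word n // IsStar C α}) :
    CA.bas k ∈ (CA.ad (CA.t i)).eigenspace (adtDiag C a i k) :=
  mem_eigenspace_iff.mpr (CA.ad_t_bas i k)

lemma hasEigenvalue_ad_t_iff {μ : F} :
    (CA.ad (CA.t i)).HasEigenvalue μ ↔ ∃ k, adtDiag C a i k = μ :=
  CA.bas.hasEigenvalue_iff_of_diagonal (CA.ad_t_bas i)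

lemma hasEigenvalue_ad_t_a {α : Word n} (hα : IsStar C α) (hαi : α i = 1) :
    (CA.ad (CA.t i)).HasEigenvalue (a i α) :=
  (CA.hasEigenvalue_ad_t_iff i).mpr ⟨.inr ⟨α, hα⟩, if_pos hαi⟩

lemma hasEigenvalue_ad_t_iff_mem_image {μ : F} (hμ0 : μ ≠ 0) (hμ1 : μ ≠ 1) :
    (CA.ad (CA.t i)).HasEigenvalue μ ↔ μ ∈ a i '' {α | IsStar C α ∧ α i = 1} := by
  constructor
  · intro h
    obtain ⟨j | ⟨α, hα⟩, rfl⟩ := (CA.hasEigenvalue_ad_t_iff i).mp h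
    · by_cases hji : j = i <;> simp [adtDiag, hji] at hμ0 hμ1
    · by_cases hαi : α i = 1
      · exact ⟨α, ⟨hα, hαi⟩, (if_pos hαi).symm⟩
      · simp [adtDiag, hαi] at hμ0
  · rintro ⟨α, ⟨hα, hαi⟩, rfl⟩
    exact CA.hasEigenvalue_ad_t_a i hα hαi

lemma e_ne_zero {α : Word n} (hα : IsStar C α) : CA.e α ≠ 0 :=
  CA.bas_e ⟨α, hα⟩ ▸ CA.bas.ne_zero _

lemma e_mem_eigenspace_ad_t {α : Word n} (hα : IsStar C α) (hαi : α i = 1) :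
    CA.e α ∈ (CA.ad (CA.t i)).eigenspace (a i α) := by
  rw [mem_eigenspace_iff, CA.t_mul_e i α hα, if_pos hαi]

lemma e_mem_eigenspace_ad_t_zero {α : Word n} (hα : IsStar C α) (hαi : α i ≠ 1) :
    CA.e α ∈ (CA.ad (CA.t i)).eigenspace 0 := by
  rw [mem_eigenspace_iff, CA.t_mul_e i α hα, if_neg hαi, zero_smul]

lemma t_mem_eigenspace_ad_t_zero {j : Fin n} (hji : j ≠ i) :
    CA.t j ∈ (CA.ad (CA.t i)).eigenspace 0 := by
  rw [mem_eigenspace_iff, CA.t_mul_t, if_neg hji.symm, zero_smul]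

lemma ad_t_mem_eigenspace_ad_t (j : Fin n) {μ : F} {y : A}
    (hy : y ∈ (CA.ad (CA.t i)).eigenspace μ) :
    CA.mul (CA.t j) y ∈ (CA.ad (CA.t i)).eigenspace μ :=
  mapsTo_genEigenspace_of_comm (CA.bas.commute_of_diagonal (CA.ad_t_bas i) (CA.ad_t_bas j)) μ 1 hy

lemma a_eq_of_mul_mem_eigenspace
    (hB : ∀ α β, IsStar C α → IsStar C β → α ≠ β → α + β ≠ 1 → b α β ≠ 0)
    {α β : Word n} (hα : IsStar C α) (hβ : IsStar C β) (hαi : α i = 1) (hβi : β i = 1)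
    (hS : ∀ x ∈ (CA.ad (CA.t i)).eigenspace 0, ∀ y ∈ (CA.ad (CA.t i)).eigenspace (a i α),
      CA.mul x y ∈ (CA.ad (CA.t i)).eigenspace (a i α)) :
    a i α = a i β := by
  rcases eq_or_ne α β with rfl | hαβ
  · rfl
  have hγi : (α + β) i = 0 := by rw [Pi.add_apply, hαi, hβi, ZModModule.add_self]
  have hγ : IsStar C (α + β) :=
    isStar_add hα hβ hαβ fun h => one_ne_zero (congrFun h i ▸ hγi)
  have hγα : α + β + α = β := by rw [add_comm α β, add_assoc, ZModModule.add_self, add_zero]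
  have hγα_ne : α + β ≠ α := fun h => one_ne_zero (hαi ▸ h ▸ hγi)
  have hγα1 : α + β + α ≠ 1 := by rw [hγα]; exact hβ.2.2
  have hprod := hS _ (CA.e_mem_eigenspace_ad_t_zero i hγ (hγi ▸ zero_ne_one)) _
    (CA.e_mem_eigenspace_ad_t i hα hαi)
  rw [CA.e_mul_e _ _ hγ hα hγα_ne hγα1, hγα,
    Submodule.smul_mem_iff _ (hB _ _ hγ hα hγα_ne hγα1)] at hprod
  refine smul_left_injective F (CA.e_ne_zero hβ) ?_
  exact (mem_eigenspace_iff.mp hprod).symm.trans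
    (mem_eigenspace_iff.mp (CA.e_mem_eigenspace_ad_t i hβ hβi))

lemma e_mul_e_mem_eigenspace_ad_t (hS : (a i '' {α | IsStar C α ∧ α i = 1}).Subsingleton)
    {γ β : Word n} (hγ : IsStar C γ) (hγi : γ i = 0) (hβ : IsStar C β) :
    CA.mul (CA.e γ) (CA.e β) ∈ (CA.ad (CA.t i)).eigenspace (if β i = 1 then a i β else 0) := by
  rcases eq_or_ne γ β with rfl | hne
  · rw [if_neg (hγi ▸ zero_ne_one), CA.e_mul_self γ hγ]
    refine Submodule.sum_mem _ fun j hj => Submodule.smul_mem _ _ ?_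
    refine CA.t_mem_eigenspace_ad_t_zero i fun hji => ?_
    simp only [wsupp, Finset.mem_filter, hji, hγi] at hj
    exact zero_ne_one hj.2
  by_cases h1 : γ + β = 1
  · rw [CA.e_mul_compl γ β hγ hβ h1]
    exact Submodule.zero_mem _
  rw [CA.e_mul_e γ β hγ hβ hne h1]
  refine Submodule.smul_mem _ _ ?_
  have hδ := isStar_add hγ hβ hne h1
  have hδi : (γ + β) i = β i := by rw [Pi.add_apply, hγi, zero_add]
  split_ifs with hβi
  · rw [hS ⟨β, ⟨hβ, hβi⟩, rfl⟩ ⟨γ + β, ⟨hδ, hδi.trans hβi⟩, rfl⟩]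
    exact CA.e_mem_eigenspace_ad_t i hδ (hδi.trans hβi)
  · exact CA.e_mem_eigenspace_ad_t_zero i hδ (hδi ▸ hβi)

lemma bas_mul_bas_mem_eigenspace_ad_t (hA : ∀ i α, IsStar C α → α i = 1 → a i α ≠ 0)
    (hS : (a i '' {α | IsStar C α ∧ α i = 1}).Subsingleton) {μ : F} (hμ1 : μ ≠ 1)
    {k l : Fin n ⊕ {α : Word n // IsStar C α}} (hk : adtDiag C a i k = 0)
    (hl : adtDiag C a i l = μ) :
    CA.mul (CA.bas k) (CA.bas l) ∈ (CA.ad (CA.t i)).eigenspace μ := by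
  rcases k with j | ⟨γ, hγ⟩
  · rw [CA.bas_t]
    exact CA.ad_t_mem_eigenspace_ad_t i j (hl ▸ CA.bas_mem_eigenspace_ad_t i l)
  rcases l with m | ⟨β, hβ⟩
  · have hμ0 : μ = 0 := by
      by_cases hmi : m = i <;> simp [adtDiag, hmi] at hl <;> simp_all
    rw [CA.mul_comm, CA.bas_t, hμ0, ← hk]
    exact CA.ad_t_mem_eigenspace_ad_t i m (CA.bas_mem_eigenspace_ad_t i _)
  have hγi : γ i = 0 := ZMod.eq_zero_of_ne_one_two fun hγi => by
    simp [adtDiag, hγi, hA i γ hγ hγi] at hk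
  rw [CA.bas_e, CA.bas_e, ← hl]
  exact CA.e_mul_e_mem_eigenspace_ad_t i hS hγ hγi hβ

lemma seress_iff_subsingleton (hA : ∀ i α, IsStar C α → α i = 1 → a i α ≠ 0)
    (hB : ∀ α β, IsStar C α → IsStar C β → α ≠ β → α + β ≠ 1 → b α β ≠ 0)
    (ha1 : ∀ α, IsStar C α → α i = 1 → a i α ≠ 1) :
    (∀ μ : F, μ ≠ 1 → (CA.ad (CA.t i)).HasEigenvalue μ →
      ∀ x ∈ (CA.ad (CA.t i)).eigenspace 0, ∀ y ∈ (CA.ad (CA.t i)).eigenspace μ,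
        CA.mul x y ∈ (CA.ad (CA.t i)).eigenspace μ) ↔
    (a i '' {α | IsStar C α ∧ α i = 1}).Subsingleton := by
  constructor
  · rintro hS _ ⟨α, ⟨hα, hαi⟩, rfl⟩ _ ⟨β, ⟨hβ, hβi⟩, rfl⟩
    exact CA.a_eq_of_mul_mem_eigenspace i hB hα hβ hαi hβi
      (hS _ (ha1 α hα hαi) (CA.hasEigenvalue_ad_t_a i hα hαi))
  · intro hS μ hμ1 _ x hx y hy
    have hspan := CA.bas.eigenspace_le_span_of_diagonal (CA.ad_t_bas i)
    refine Submodule.map₂_le.mp ?_ x (hspan 0 hx) y (hspan μ hy)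
    rw [Submodule.map₂_span_span, Submodule.span_le]
    rintro _ ⟨_, ⟨k, hk, rfl⟩, _, ⟨l, hl, rfl⟩, rfl⟩
    exact CA.bas_mul_bas_mem_eigenspace_ad_t i hA hS hμ1 hk hl

end CodeAlgebra

/-- Proposition 3.14: the fusion law for t_i satisfies the Seress condition if and only if
ad_(t_i) has at most one eigenvalue different from 0 and 1. -/
theorem seress_iff_one_eigenvalue {F : Type*} [Field F] {n : ℕ}
    {C : Submodule (ZMod 2) (Word n)}
    {a : Fin n → Word n → F} {b : Word n → Word n → F} {c : Fin n → Word n → F}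
    {A : Type*} [AddCommGroup A] [Module F A]
    (CA : CodeAlgebra F C a b c A)
    (hnd : Nondeg C a b c) (i : Fin n)
    (ha1 : ∀ α, IsStar C α → α i = 1 → a i α ≠ 1)
    (f : Module.End F A) (hf : f = CA.mul (CA.t i)) :
    (∀ μ : F, μ ≠ 1 → f.HasEigenvalue μ →
      ∀ x ∈ f.eigenspace 0, ∀ y ∈ f.eigenspace μ, CA.mul x y ∈ f.eigenspace μ) ↔
    (∀ μ ν : F, f.HasEigenvalue μ → f.HasEigenvalue ν →
      μ ≠ 0 → μ ≠ 1 → ν ≠ 0 → ν ≠ 1 → μ = ν) := by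
  subst hf
  obtain ⟨-, -, hA, hB, -⟩ := hnd
  refine (CA.seress_iff_subsingleton i hA hB ha1).trans ⟨?_, ?_⟩
  · intro hS μ ν hμ hν hμ0 hμ1 hν0 hν1
    exact hS ((CA.hasEigenvalue_ad_t_iff_mem_image i hμ0 hμ1).mp hμ)
      ((CA.hasEigenvalue_ad_t_iff_mem_image i hν0 hν1).mp hν)
  · rintro H _ ⟨α, ⟨hα, hαi⟩, rfl⟩ _ ⟨β, ⟨hβ, hβi⟩, rfl⟩
    exact H _ _ (CA.hasEigenvalue_ad_t_a i hα hαi) (CA.hasEigenvalue_ad_t_a i hβ hβi)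
      (hA i α hα hαi) (ha1 α hα hαi) (hA i β hβ hβi) (ha1 β hβ hβi)
end

section
/- Let C be a constant weight binary linear code and A = A_C(Λ) a code algebra. Let α, β ∈ C* with β ≠ α, α^c, and suppose a_α := a_{i,α} is independent of i ∈ supp(α), a_β := a_{i,β} is independent of i ∈ supp(β), a_β = a_{α+β}, and b_{α,β} = b_{α,α+β}. Let e = λ·t_α + μ·e^α with λ = 1/(2·a_α·|α|). Then e^β − e^{α+β} is an eigenvector of ad_e with eigenvalue a_β/(4a_α) − μ·b_{α,β}, and e^β + e^{α+β} is an eigenvector of ad_e with eigenvalue a_β/(4a_α) + μ·b_{α,β}. -/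
@[simp]
theorem mem_wsupp {n : ℕ} {α : Word n} {i : Fin n} : i ∈ wsupp α ↔ α i = 1 := by
  simp [wsupp]

section Words

variable {n : ℕ} (α β : Word n)

theorem wsupp_add :
    wsupp (α + β) = (wsupp α ∪ wsupp β) \ (wsupp α ∩ wsupp β) := by
  ext i
  simp only [mem_wsupp, Finset.mem_sdiff, Finset.mem_union, Finset.mem_inter, Pi.add_apply]
  generalize α i = x; generalize β i = y
  revert x y; decide

theorem wsupp_inter_wsupp_add : wsupp α ∩ wsupp (α + β) = wsupp α \ wsupp β := by
  ext i
  simp only [mem_wsupp, Finset.mem_sdiff, Finset.mem_inter, Pi.add_apply]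
  generalize α i = x; generalize β i = y
  revert x y; decide

theorem card_wsupp_add_add_two_mul_card_inter :
    (wsupp (α + β)).card + 2 * (wsupp α ∩ wsupp β).card = (wsupp α).card + (wsupp β).card := by
  have hsub : wsupp α ∩ wsupp β ⊆ wsupp α ∪ wsupp β :=
    Finset.inter_subset_left.trans Finset.subset_union_left
  rw [wsupp_add, Finset.card_sdiff_of_subset hsub, ← Finset.card_union_add_card_inter]
  have := Finset.card_le_card hsub
  omega

theorem card_inter_wsupp_add_add_card_inter :
    (wsupp α ∩ wsupp (α + β)).card + (wsupp α ∩ wsupp β).card = (wsupp α).card := by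
  rw [wsupp_inter_wsupp_add, add_comm]
  exact Finset.card_inter_add_card_sdiff _ _

end Words

theorem IsStar.add {n : ℕ} {C : Submodule (ZMod 2) (Word n)} {α β : Word n}
    (hα : IsStar C α) (hβ : IsStar C β) (hne : β ≠ α) (hnc : α + β ≠ 1) :
    IsStar C (α + β) := by
  refine ⟨C.add_mem hα.1 hβ.1, fun h => hne ?_, hnc⟩
  rw [add_eq_zero_iff_eq_neg', ZModModule.neg_eq_self] at h
  exact h

namespace Module.End

variable {R M : Type*} [CommRing R] [Nontrivial R] [AddCommGroup M] [Module R M]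
  {f : Module.End R M} {x y : M} {κ ν : R}

theorem hasEigenvector_add_of_swap (hxy : LinearIndependent R ![x, y])
    (hx : f x = κ • x + ν • y) (hy : f y = κ • y + ν • x) :
    f.HasEigenvector (κ + ν) (x + y) := by
  refine ⟨mem_eigenspace_iff.mpr ?_, fun h => ?_⟩
  · rw [map_add, hx, hy]
    module
  · have := LinearIndependent.pair_iff.mp hxy 1 1 (by simpa using h)
    exact one_ne_zero this.1

theorem hasEigenvector_sub_of_swap (hxy : LinearIndependent R ![x, y])
    (hx : f x = κ • x + ν • y) (hy : f y = κ • y + ν • x) :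
    f.HasEigenvector (κ - ν) (x - y) := by
  refine ⟨mem_eigenspace_iff.mpr ?_, fun h => ?_⟩
  · rw [map_sub, hx, hy]
    module
  · have := LinearIndependent.pair_iff.mp hxy 1 (-1) (by simpa [← sub_eq_add_neg] using h)
    exact one_ne_zero this.1

end Module.End

namespace CodeAlgebra

variable {F : Type*} [Field F] {n : ℕ} {C : Submodule (ZMod 2) (Word n)}
  {a : Fin n → Word n → F} {b : Word n → Word n → F} {c : Fin n → Word n → F}
  {A : Type*} [AddCommGroup A] [Module F A] (CA : CodeAlgebra F C a b c A)

theorem linearIndependent_e_pair {β γ : Word n} (hβ : IsStar C β) (hγ : IsStar C γ)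
    (hne : β ≠ γ) : LinearIndependent F ![CA.e β, CA.e γ] := by
  have hinj : Function.Injective
      ![(Sum.inr ⟨β, hβ⟩ : Fin n ⊕ {α : Word n // IsStar C α}), Sum.inr ⟨γ, hγ⟩] := by
    intro i j
    fin_cases i <;> fin_cases j <;> simp [hne, hne.symm]
  convert CA.bas.linearIndependent.comp _ hinj using 1
  ext i
  fin_cases i <;> simp [CA.bas_e]

theorem mul_sum_t_e (S : Finset (Fin n)) {γ : Word n} (hγ : IsStar C γ) {aγ : F}
    (ha : ∀ i, γ i = 1 → a i γ = aγ) :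
    CA.mul (∑ i ∈ S, CA.t i) (CA.e γ) = ((S ∩ wsupp γ).card * aγ) • CA.e γ := by
  have hterm : ∀ i ∈ S, CA.mul (CA.t i) (CA.e γ) = if γ i = 1 then aγ • CA.e γ else 0 := by
    intro i _
    rw [CA.t_mul_e i γ hγ]
    split_ifs with h
    · rw [ha i h]
    · rfl
  rw [map_sum, LinearMap.sum_apply, Finset.sum_congr rfl hterm, ← Finset.sum_filter,
    Finset.sum_const, ← Nat.cast_smul_eq_nsmul F, smul_smul]
  congr
  ext i
  simp

theorem mul_smul_sum_t_add_smul_e_apply {α γ : Word n} (hα : IsStar C α) (hγ : IsStar C γ)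
    (hne : γ ≠ α) (hnc : α + γ ≠ 1) {aγ : F} (ha : ∀ i, γ i = 1 → a i γ = aγ) (lam mu : F) :
    CA.mul (lam • ∑ i ∈ wsupp α, CA.t i + mu • CA.e α) (CA.e γ)
      = (lam * (wsupp α ∩ wsupp γ).card * aγ) • CA.e γ + (mu * b α γ) • CA.e (α + γ) := by
  rw [map_add, map_smul, map_smul, LinearMap.add_apply, LinearMap.smul_apply,
    LinearMap.smul_apply, CA.mul_sum_t_e _ hγ ha, CA.e_mul_e α γ hα hγ hne.symm hnc,
    smul_smul, smul_smul, mul_assoc]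

end CodeAlgebra

theorem small_idempotent_paired_eigenvectors_general {F : Type*} [Field F] {n : ℕ}
    {C : Submodule (ZMod 2) (Word n)}
    {a : Fin n → Word n → F} {b : Word n → Word n → F} {c : Fin n → Word n → F}
    {A : Type*} [AddCommGroup A] [Module F A]
    (CA : CodeAlgebra F C a b c A)
    (hcw : ∃ d : ℕ, ∀ γ, IsStar C γ → (wsupp γ).card = d)
    (α β : Word n) (hα : IsStar C α) (hβ : IsStar C β)
    (hne : β ≠ α) (hnc : α + β ≠ 1)
    (aα aβ : F)
    (haβ : ∀ i, β i = 1 → a i β = aβ)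
    (haαβ : ∀ i, (α + β) i = 1 → a i (α + β) = aβ)
    (hbb : b α β = b α (α + β))
    (h2 : (2 : F) * aα * ((wsupp α).card : F) ≠ 0)
    (lam mu : F) (hlam : lam = ((2 : F) * aα * ((wsupp α).card : F))⁻¹)
    (s : A) (hs : s = lam • (∑ i ∈ wsupp α, CA.t i) + mu • CA.e α)
    (f : Module.End F A) (hf : f = CA.mul s) :
    f.HasEigenvector (aβ / (4 * aα) - mu * b α β) (CA.e β - CA.e (α + β)) ∧
    f.HasEigenvector (aβ / (4 * aα) + mu * b α β) (CA.e β + CA.e (α + β)) := by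
  obtain ⟨d, hd⟩ := hcw
  have hαβ := hα.add hβ hne hnc
  have hcancel : α + (α + β) = β := by rw [← add_assoc, ZModModule.add_self, zero_add]
  set k := (wsupp α ∩ wsupp β).card
  have hcard := card_wsupp_add_add_two_mul_card_inter α β
  have hcard' := card_inter_wsupp_add_add_card_inter α β
  have hwα := hd α hα
  have hwβ := hd β hβ
  have hwαβ := hd (α + β) hαβ
  have hαk : (wsupp α).card = 2 * k := by omega
  have hk : (wsupp α ∩ wsupp (α + β)).card = k := by omega
  have hscalar : lam * k * aβ = aβ / (4 * aα) := by
    rw [hαk, Nat.cast_mul, Nat.cast_two] at h2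
    have hk0 : (k : F) ≠ 0 := right_ne_zero_of_mul (right_ne_zero_of_mul h2)
    rw [hlam, hαk]
    push_cast
    field_simp
    ring
  have hfβ : f (CA.e β) = (aβ / (4 * aα)) • CA.e β + (mu * b α β) • CA.e (α + β) := by
    rw [hf, hs, CA.mul_smul_sum_t_add_smul_e_apply hα hβ hne hnc haβ, hscalar]
  have hfαβ : f (CA.e (α + β)) = (aβ / (4 * aα)) • CA.e (α + β) + (mu * b α β) • CA.e β := by
    rw [hf, hs, CA.mul_smul_sum_t_add_smul_e_apply hα hαβ (fun h => hβ.2.1 (add_eq_left.mp h))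
      (by rw [hcancel]; exact hβ.2.2) haαβ, hk, hscalar, hcancel, hbb]
  have hind := CA.linearIndependent_e_pair hβ hαβ fun h => hα.2.1 (right_eq_add.mp h)
  exact ⟨Module.End.hasEigenvector_sub_of_swap hind hfβ hfαβ,
    Module.End.hasEigenvector_add_of_swap hind hfβ hfαβ⟩

/-- Lemma 4.8: paired eigenvectors of the small idempotent in a constant weight code. -/
theorem small_idempotent_paired_eigenvectors {F : Type*} [Field F] {n : ℕ}
    {C : Submodule (ZMod 2) (Word n)}
    {a : Fin n → Word n → F} {b : Word n → Word n → F} {c : Fin n → Word n → F}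
    {A : Type*} [AddCommGroup A] [Module F A]
    (CA : CodeAlgebra F C a b c A)
    (hcw : ∃ d : ℕ, ∀ γ, IsStar C γ → (wsupp γ).card = d)
    (α β : Word n) (hα : IsStar C α) (hβ : IsStar C β)
    (hne : β ≠ α) (hnc : α + β ≠ 1)
    (aα aβ : F)
    (haα : ∀ i, α i = 1 → a i α = aα)
    (haβ : ∀ i, β i = 1 → a i β = aβ)
    (haαβ : ∀ i, (α + β) i = 1 → a i (α + β) = aβ)
    (hbb : b α β = b α (α + β))
    (h2 : (2 : F) * aα * ((wsupp α).card : F) ≠ 0)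
    (lam mu : F) (hlam : lam = ((2 : F) * aα * ((wsupp α).card : F))⁻¹)
    (s : A) (hs : s = lam • (∑ i ∈ wsupp α, CA.t i) + mu • CA.e α)
    (f : Module.End F A) (hf : f = CA.mul s) :
    f.HasEigenvector (aβ / (4 * aα) - mu * b α β) (CA.e β - CA.e (α + β)) ∧
    f.HasEigenvector (aβ / (4 * aα) + mu * b α β) (CA.e β + CA.e (α + β)) :=
  small_idempotent_paired_eigenvectors_general CA hcw α β hα hβ hne hnc aα aβ haβ haαβ hbb h2 lam mu
    hlam s hs f hf
end
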